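/- arXiv:1906.08489 — 3 statements merged into one kernel-verified Lean document; each statement's English description precedes it below -/
import Mathlib

section
/- Let q : ℝ × ℝ → ℂ be twice continuously differentiable. For k ∈ ℂ set X(x,t,k) = −ik σ₃ + U(x,t) and T(x,t,k) = −2ik² σ₃ + V(x,t,k). Then q satisfies the NNLS equation at every point (x,t) if and only if the zero-curvature equation ∂_t X(x,t,k) − ∂_x T(x,t,k) + X(x,t,k)·T(x,t,k) − T(x,t,k)·X(x,t,k) = 0 holds for every k ∈ ℂ and every (x,t) ∈ ℝ². -/
open Complex Matrix

/-- The Pauli matrix σ₃. -/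
noncomputable def sigma3 : Matrix (Fin 2) (Fin 2) ℂ := !![1, 0; 0, -1]

/-- The matrix U(x,t) of the Lax pair of the NNLS equation. -/
noncomputable def Umat (q : ℝ × ℝ → ℂ) (x t : ℝ) : Matrix (Fin 2) (Fin 2) ℂ :=
  !![0, q (x, t); -(starRingEnd ℂ) (q (-x, t)), 0]

/-- The matrix V(x,t,k) of the Lax pair of the NNLS equation. -/
noncomputable def Vmat (q : ℝ × ℝ → ℂ) (x t : ℝ) (k : ℂ) : Matrix (Fin 2) (Fin 2) ℂ :=
  !![I * q (x, t) * (starRingEnd ℂ) (q (-x, t)),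
     2 * k * q (x, t) + I * deriv (fun y => q (y, t)) x;
     -2 * k * (starRingEnd ℂ) (q (-x, t)) - I * (starRingEnd ℂ) (deriv (fun y => q (y, t)) (-x)),
     -(I * q (x, t) * (starRingEnd ℂ) (q (-x, t)))]

/-- X(x,t,k) = −ik σ₃ + U(x,t). -/
noncomputable def Xmat (q : ℝ × ℝ → ℂ) (x t : ℝ) (k : ℂ) : Matrix (Fin 2) (Fin 2) ℂ :=
  (-(I * k)) • sigma3 + Umat q x t

/-- T(x,t,k) = −2ik² σ₃ + V(x,t,k). -/
noncomputable def Tmat (q : ℝ × ℝ → ℂ) (x t : ℝ) (k : ℂ) : Matrix (Fin 2) (Fin 2) ℂ :=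
  (-(2 * I * k ^ 2)) • sigma3 + Vmat q x t k

/-
The Lax pair is built so that the spectral parameter drops out: in `∂ₜX − ∂ₓT + [X, T]` the
powers `k` and `k²` cancel entrywise, the diagonal entries cancel outright, and what is left is the
off-diagonal matrix with entries `−i r(x,t)` and `−i conj (r(−x,t))`, where `r` is the NNLS residual
`i qₜ + qₓₓ + 2q² conj q(−x)`. The second entry is the first one reflected and conjugated, so zero
curvature at all `(x,t)` is the NNLS equation at all `(x,t)`.
-/

open ComplexConjugate

theorem HasDerivAt.conj_comp_neg {f : ℝ → ℂ} {f' : ℂ} {x : ℝ} (hf : HasDerivAt f f' (-x)) :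
    HasDerivAt (fun y => conj (f (-y))) (-conj f') x := by
  simpa using (hf.scomp x (hasDerivAt_neg x)).star

namespace NNLS

section PartialDerivatives

variable {E : Type*} [NormedAddCommGroup E] [NormedSpace ℝ E] {q : ℝ × ℝ → E}

noncomputable def partialX (q : ℝ × ℝ → E) (p : ℝ × ℝ) : E := deriv (fun y => q (y, p.2)) p.1

noncomputable def partialT (q : ℝ × ℝ → E) (p : ℝ × ℝ) : E := deriv (fun s => q (p.1, s)) p.2

theorem hasDerivAt_fderiv_apply_fst (hq : Differentiable ℝ q) (x t : ℝ) :
    HasDerivAt (fun y => q (y, t)) (fderiv ℝ q (x, t) (1, 0)) x :=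
  (hq (x, t)).hasFDerivAt.comp_hasDerivAt x ((hasDerivAt_id x).prodMk (hasDerivAt_const x t))

theorem hasDerivAt_fderiv_apply_snd (hq : Differentiable ℝ q) (x t : ℝ) :
    HasDerivAt (fun s => q (x, s)) (fderiv ℝ q (x, t) (0, 1)) t :=
  (hq (x, t)).hasFDerivAt.comp_hasDerivAt t ((hasDerivAt_const t x).prodMk (hasDerivAt_id t))

theorem partialX_eq_fderiv (hq : Differentiable ℝ q) (p : ℝ × ℝ) :
    partialX q p = fderiv ℝ q p (1, 0) :=
  (hasDerivAt_fderiv_apply_fst hq p.1 p.2).deriv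

theorem hasDerivAt_partialX (hq : Differentiable ℝ q) (x t : ℝ) :
    HasDerivAt (fun y => q (y, t)) (partialX q (x, t)) x :=
  (hasDerivAt_fderiv_apply_fst hq x t).differentiableAt.hasDerivAt

theorem hasDerivAt_partialT (hq : Differentiable ℝ q) (x t : ℝ) :
    HasDerivAt (fun s => q (x, s)) (partialT q (x, t)) t :=
  (hasDerivAt_fderiv_apply_snd hq x t).differentiableAt.hasDerivAt

theorem _root_.ContDiff.partialX {n : WithTop ℕ∞} (hq : ContDiff ℝ (n + 1) q) :
    ContDiff ℝ n (partialX q) := by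
  have hdiff : Differentiable ℝ q := hq.differentiable (by simp)
  rw [funext (partialX_eq_fderiv hdiff)]
  exact (hq.fderiv_right le_rfl).clm_apply contDiff_const

end PartialDerivatives

section LaxPair

variable {q : ℝ × ℝ → ℂ}

theorem hasDerivAt_Xmat_apply (hq : Differentiable ℝ q) (k : ℂ) (x t : ℝ) (i j : Fin 2) :
    HasDerivAt (fun s => Xmat q x s k i j) (Umat (partialT q) x t i j) t := by
  have hq_neg : HasDerivAt (fun s => -conj (q (-x, s))) (-conj (partialT q (-x, t))) t :=
    (hasDerivAt_partialT hq (-x) t).star.neg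
  fin_cases i <;> fin_cases j <;> simp [Xmat, Umat, sigma3]
  exacts [hasDerivAt_const _ _, hasDerivAt_partialT hq x t, hq_neg, hasDerivAt_const _ _]

theorem hasDerivAt_Tmat_apply (hq : Differentiable ℝ q) (hqx : Differentiable ℝ (partialX q))
    (k : ℂ) (x t : ℝ) (i j : Fin 2) :
    HasDerivAt (fun y => Tmat q y t k i j)
      (!![I * (partialX q (x, t) * conj (q (-x, t)) - q (x, t) * conj (partialX q (-x, t))),
          2 * k * partialX q (x, t) + I * partialX (partialX q) (x, t);
          2 * k * conj (partialX q (-x, t)) + I * conj (partialX (partialX q) (-x, t)),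
          -(I * (partialX q (x, t) * conj (q (-x, t)) - q (x, t) * conj (partialX q (-x, t))))]
        i j) x := by
  have hq' := hasDerivAt_partialX hq x t
  have hqx' := hasDerivAt_partialX hqx x t
  have hq_refl := (hasDerivAt_partialX hq (-x) t).conj_comp_neg
  have hqx_refl := (hasDerivAt_partialX hqx (-x) t).conj_comp_neg
  have hdiag := (hq'.const_mul I).mul hq_refl
  fin_cases i <;> fin_cases j <;> simp [Tmat, Vmat, sigma3]
  · exact hdiag.congr_deriv (by ring)
  · exact (hq'.const_mul (2 * k)).add (hqx'.const_mul I)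
  · exact ((hq_refl.const_mul (2 * k)).neg.sub (hqx_refl.const_mul I)).congr_deriv (by ring)
  · exact hdiag.neg.congr_deriv (by ring)

noncomputable def residual (q : ℝ × ℝ → ℂ) (x t : ℝ) : ℂ :=
  I * partialT q (x, t) + partialX (partialX q) (x, t) + 2 * q (x, t) ^ 2 * conj (q (-x, t))

noncomputable def curvature (q : ℝ × ℝ → ℂ) (k : ℂ) (x t : ℝ) : Matrix (Fin 2) (Fin 2) ℂ :=
  of fun i j => deriv (fun s => Xmat q x s k i j) t - deriv (fun y => Tmat q y t k i j) x
    + (Xmat q x t k * Tmat q x t k - Tmat q x t k * Xmat q x t k) i j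

theorem curvature_eq (hq : ContDiff ℝ 2 q) (k : ℂ) (x t : ℝ) :
    curvature q k x t = !![0, -I * residual q x t; -I * conj (residual q (-x) t), 0] := by
  have hdiff : Differentiable ℝ q := hq.differentiable (by norm_num)
  have hxdiff : Differentiable ℝ (partialX q) :=
    (ContDiff.partialX (n := 1) hq).differentiable one_ne_zero
  have hV : Vmat q x t k = !![I * q (x, t) * conj (q (-x, t)),
      2 * k * q (x, t) + I * partialX q (x, t);
      -2 * k * conj (q (-x, t)) - I * conj (partialX q (-x, t)),
      -(I * q (x, t) * conj (q (-x, t)))] := rfl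
  ext i j
  rw [curvature, of_apply, (hasDerivAt_Xmat_apply hdiff k x t i j).deriv,
    (hasDerivAt_Tmat_apply hdiff hxdiff k x t i j).deriv]
  fin_cases i <;> fin_cases j <;>
    simp [Xmat, Tmat, Umat, hV, sigma3, residual, map_ofNat] <;>
    ring_nf <;> simp [I_sq]

theorem curvature_eq_zero_iff (hq : ContDiff ℝ 2 q) (k : ℂ) (x t : ℝ) :
    curvature q k x t = 0 ↔ residual q x t = 0 ∧ residual q (-x) t = 0 := by
  rw [curvature_eq hq, ← Matrix.ext_iff]
  simp [Fin.forall_fin_two]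

end LaxPair

end NNLS

/-- A twice continuously differentiable `q` satisfies the NNLS equation at every point
if and only if the zero-curvature equation
`∂ₜ X − ∂ₓ T + X·T − T·X = 0` holds for every spectral parameter `k` and every `(x,t)`. -/
theorem nnls_iff_zero_curvature (q : ℝ × ℝ → ℂ) (hq : ContDiff ℝ 2 q) :
    (∀ x t : ℝ,
        I * deriv (fun s => q (x, s)) t
          + deriv (fun y => deriv (fun y' => q (y', t)) y) x
          + 2 * q (x, t) ^ 2 * (starRingEnd ℂ) (q (-x, t)) = 0)
    ↔ (∀ (k : ℂ) (x t : ℝ) (i j : Fin 2),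
        deriv (fun s => Xmat q x s k i j) t - deriv (fun y => Tmat q y t k i j) x
          + (Xmat q x t k * Tmat q x t k - Tmat q x t k * Xmat q x t k) i j = 0) := by
  change (∀ x t, NNLS.residual q x t = 0) ↔
    ∀ k x t, ∀ i j, NNLS.curvature q k x t i j = (0 : Matrix (Fin 2) (Fin 2) ℂ) i j
  simp only [Matrix.ext_iff, NNLS.curvature_eq_zero_iff hq]
  exact ⟨fun h _ x t => ⟨h x t, h (-x) t⟩, fun h x t => (h 0 x t).1⟩
end

section
/- Let q : ℝ × ℝ → ℂ be continuously differentiable, let k ∈ ℂ, and let Φ : ℝ × ℝ → M₂(ℂ) be continuously differentiable and satisfy both Lax equations at the spectral parameter −conj(k): ∂_x Φ(x,t) + i(−conj(k)) σ₃ Φ(x,t) = U(x,t) Φ(x,t) and ∂_t Φ(x,t) + 2i(−conj(k))² σ₃ Φ(x,t) = V(x,t,−conj(k)) Φ(x,t) for all (x,t). Then the matrix function Ψ(x,t) := Λ · conj(Φ(−x,t)) · Λ (entrywise complex conjugation) satisfies the same Lax equations at the spectral parameter k: ∂_x Ψ + ik σ₃ Ψ = U(x,t) Ψ and ∂_t Ψ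 + 2ik² σ₃ Ψ = V(x,t,k) Ψ for all (x,t). -/
open Complex Matrix

/-- The permutation matrix Λ = [[0,1],[1,0]] (note Λ⁻¹ = Λ). -/
noncomputable def Lam : Matrix (Fin 2) (Fin 2) ℂ := !![0, 1; 1, 0]

/-- Ψ(x,t) = Λ·conj(Φ(−x,t))·Λ, with entrywise complex conjugation. -/
noncomputable def PsiOf (Φ : ℝ × ℝ → Matrix (Fin 2) (Fin 2) ℂ) (x t : ℝ) :
    Matrix (Fin 2) (Fin 2) ℂ :=
  Lam * (Φ (-x, t)).map (starRingEnd ℂ) * Lam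

/-! The map `A ↦ Λ · conj A · Λ` is a conjugate-linear ring automorphism of `M₂(ℂ)` (since
`Λ² = 1`) which sends `σ₃` to `-σ₃`, `U(-x,t)` to `-U(x,t)` and `V(-x,t,-k̄)` to `V(x,t,k)`.
Applying it to the Lax equations of `Φ` at `(-x,t)` therefore yields those of `Ψ` at `(x,t)`;
in the `x`-equation the reflection `y ↦ -y` flips the sign of the derivative, which is
compensated by `U ↦ -U` and `σ₃ ↦ -σ₃`. -/

noncomputable def entrywiseDeriv {m n : Type*} (f : ℝ → Matrix m n ℂ) (x : ℝ) : Matrix m n ℂ :=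
  Matrix.of fun i j => deriv (fun y => f y i j) x

section entrywiseDeriv

variable {l m n o : Type*}

theorem entrywiseDeriv_comp_neg (f : ℝ → Matrix m n ℂ) (x : ℝ) :
    entrywiseDeriv (fun y => f (-y)) x = -entrywiseDeriv f (-x) := by
  ext i j
  exact deriv_comp_neg (f := fun y => f y i j) x

theorem entrywiseDeriv_map_conj (f : ℝ → Matrix m n ℂ) (x : ℝ) :
    entrywiseDeriv (fun y => (f y).map (starRingEnd ℂ)) x
      = (entrywiseDeriv f x).map (starRingEnd ℂ) := by
  ext i j
  exact deriv.star

theorem entrywiseDeriv_submatrix (f : ℝ → Matrix m n ℂ) (e₁ : l → m) (e₂ : o → n) (x : ℝ) :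
    entrywiseDeriv (fun y => (f y).submatrix e₁ e₂) x = (entrywiseDeriv f x).submatrix e₁ e₂ :=
  rfl

end entrywiseDeriv

theorem lam_mul_lam : Lam * Lam = 1 := by
  ext i j; fin_cases i <;> fin_cases j <;> simp [Lam]

theorem lam_mul_mul_lam (A : Matrix (Fin 2) (Fin 2) ℂ) :
    Lam * A * Lam = A.submatrix (Equiv.swap 0 1) (Equiv.swap 0 1) := by
  ext i j; fin_cases i <;> fin_cases j <;> 
    simp [Lam, mul_apply, vecMul, dotProduct, Fin.sum_univ_two]

noncomputable def lamConj (A : Matrix (Fin 2) (Fin 2) ℂ) : Matrix (Fin 2) (Fin 2) ℂ :=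
  Lam * A.map (starRingEnd ℂ) * Lam

section lamConj

variable (A B : Matrix (Fin 2) (Fin 2) ℂ)

theorem lamConj_add : lamConj (A + B) = lamConj A + lamConj B := by
  simp [lamConj, Matrix.map_add, Matrix.mul_add, Matrix.add_mul]

theorem lamConj_smul (c : ℂ) : lamConj (c • A) = starRingEnd ℂ c • lamConj A := by
  simp [lamConj, Matrix.map_smul']

theorem lamConj_neg : lamConj (-A) = -lamConj A := by
  simp [lamConj, Matrix.map_neg]

theorem lamConj_mul : lamConj (A * B) = lamConj A * lamConj B := by
  simp only [lamConj, Matrix.map_mul, Matrix.mul_assoc]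
  rw [← Matrix.mul_assoc Lam Lam, lam_mul_lam, Matrix.one_mul]

end lamConj

theorem lamConj_sigma3 : lamConj sigma3 = -sigma3 := by
  ext i j; fin_cases i <;> fin_cases j <;> simp [lamConj, lam_mul_mul_lam, sigma3]

theorem lamConj_umat_neg (q : ℝ × ℝ → ℂ) (x t : ℝ) :
    lamConj (Umat q (-x) t) = -Umat q x t := by
  ext i j; fin_cases i <;> fin_cases j <;> simp [lamConj, lam_mul_mul_lam, Umat]

theorem lamConj_vmat_neg (q : ℝ × ℝ → ℂ) (x t : ℝ) (k : ℂ) :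
    lamConj (Vmat q (-x) t (-starRingEnd ℂ k)) = Vmat q x t k := by
  ext i j; fin_cases i <;> fin_cases j <;>
    simp [lamConj, lam_mul_mul_lam, Vmat, map_ofNat] <;> ring

theorem entrywiseDeriv_lamConj (f : ℝ → Matrix (Fin 2) (Fin 2) ℂ) (x : ℝ) :
    entrywiseDeriv (fun y => lamConj (f y)) x = lamConj (entrywiseDeriv f x) := by
  simp only [lamConj, lam_mul_mul_lam, entrywiseDeriv_submatrix, entrywiseDeriv_map_conj]

theorem lamConj_laxEquation {D A M : Matrix (Fin 2) (Fin 2) ℂ} {c : ℂ}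
    (h : D + c • (sigma3 * A) = M * A) :
    lamConj D + (-starRingEnd ℂ c) • (sigma3 * lamConj A) = lamConj M * lamConj A := by
  have := congrArg lamConj h
  rwa [lamConj_add, lamConj_smul, lamConj_mul, lamConj_mul, lamConj_sigma3, neg_mul, smul_neg,
    ← neg_smul] at this

section PsiOf

variable (Φ : ℝ × ℝ → Matrix (Fin 2) (Fin 2) ℂ) (x t : ℝ)

theorem psiOf_eq_lamConj : PsiOf Φ x t = lamConj (Φ (-x, t)) :=
  rfl

theorem entrywiseDeriv_psiOf_fst :
    entrywiseDeriv (fun y => PsiOf Φ y t) x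
      = -lamConj (entrywiseDeriv (fun y => Φ (y, t)) (-x)) := by
  simp only [psiOf_eq_lamConj, entrywiseDeriv_lamConj]
  rw [entrywiseDeriv_comp_neg (fun y => Φ (y, t)), lamConj_neg]

theorem entrywiseDeriv_psiOf_snd :
    entrywiseDeriv (fun s => PsiOf Φ x s) t
      = lamConj (entrywiseDeriv (fun s => Φ (-x, s)) t) :=
  entrywiseDeriv_lamConj _ t

variable {Φ x t} (q : ℝ × ℝ → ℂ) (k : ℂ)

theorem psiOf_laxX
    (h : entrywiseDeriv (fun y => Φ (y, t)) (-x)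
      + (I * -starRingEnd ℂ k) • (sigma3 * Φ (-x, t)) = Umat q (-x) t * Φ (-x, t)) :
    entrywiseDeriv (fun y => PsiOf Φ y t) x + (I * k) • (sigma3 * PsiOf Φ x t)
      = Umat q x t * PsiOf Φ x t := by
  have hΨ := lamConj_laxEquation h
  rw [← psiOf_eq_lamConj, lamConj_umat_neg] at hΨ
  simp only [map_mul, map_neg, conj_I, conj_conj, neg_mul] at hΨ
  rw [entrywiseDeriv_psiOf_fst]
  linear_combination (norm := module) -hΨ

theorem psiOf_laxT
    (h : entrywiseDeriv (fun s => Φ (-x, s)) t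
      + (2 * I * (-starRingEnd ℂ k) ^ 2) • (sigma3 * Φ (-x, t))
        = Vmat q (-x) t (-starRingEnd ℂ k) * Φ (-x, t)) :
    entrywiseDeriv (fun s => PsiOf Φ x s) t + (2 * I * k ^ 2) • (sigma3 * PsiOf Φ x t)
      = Vmat q x t k * PsiOf Φ x t := by
  have hΨ := lamConj_laxEquation h
  rw [← psiOf_eq_lamConj, lamConj_vmat_neg] at hΨ
  simp only [map_mul, map_pow, map_neg, map_ofNat, conj_I, conj_conj] at hΨ
  rw [entrywiseDeriv_psiOf_snd]
  linear_combination (norm := module) hΨ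

end PsiOf

theorem lax_pair_symmetry_general (q : ℝ × ℝ → ℂ) (k : ℂ)
    (Φ : ℝ × ℝ → Matrix (Fin 2) (Fin 2) ℂ)
    (hLaxX : ∀ (x t : ℝ) (i j : Fin 2),
      deriv (fun y => Φ (y, t) i j) x
          + ((I * (-(starRingEnd ℂ) k)) • (sigma3 * Φ (x, t))) i j
        = (Umat q x t * Φ (x, t)) i j)
    (hLaxT : ∀ (x t : ℝ) (i j : Fin 2),
      deriv (fun s => Φ (x, s) i j) t
          + ((2 * I * (-(starRingEnd ℂ) k) ^ 2) • (sigma3 * Φ (x, t))) i j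
        = (Vmat q x t (-(starRingEnd ℂ) k) * Φ (x, t)) i j) :
    (∀ (x t : ℝ) (i j : Fin 2),
      deriv (fun y => PsiOf Φ y t i j) x + ((I * k) • (sigma3 * PsiOf Φ x t)) i j
        = (Umat q x t * PsiOf Φ x t) i j) ∧
    (∀ (x t : ℝ) (i j : Fin 2),
      deriv (fun s => PsiOf Φ x s i j) t + ((2 * I * k ^ 2) • (sigma3 * PsiOf Φ x t)) i j
        = (Vmat q x t k * PsiOf Φ x t) i j) := by
  refine ⟨fun x t => Matrix.ext_iff.mpr ?_, fun x t => Matrix.ext_iff.mpr ?_⟩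
  · exact psiOf_laxX q k (Matrix.ext (hLaxX (-x) t))
  · exact psiOf_laxT q k (Matrix.ext (hLaxT (-x) t))

/-- Symmetry of the Lax pair of the NNLS equation: if Φ solves the Lax pair at the
spectral parameter −conj k, then Ψ(x,t) = Λ·conj(Φ(−x,t))·Λ solves it at k. -/
theorem lax_pair_symmetry (q : ℝ × ℝ → ℂ) (hq : ContDiff ℝ 1 q) (k : ℂ)
    (Φ : ℝ × ℝ → Matrix (Fin 2) (Fin 2) ℂ)
    (hΦ : ∀ i j : Fin 2, ContDiff ℝ 1 (fun p : ℝ × ℝ => Φ p i j))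
    (hLaxX : ∀ (x t : ℝ) (i j : Fin 2),
      deriv (fun y => Φ (y, t) i j) x
          + ((I * (-(starRingEnd ℂ) k)) • (sigma3 * Φ (x, t))) i j
        = (Umat q x t * Φ (x, t)) i j)
    (hLaxT : ∀ (x t : ℝ) (i j : Fin 2),
      deriv (fun s => Φ (x, s) i j) t
          + ((2 * I * (-(starRingEnd ℂ) k) ^ 2) • (sigma3 * Φ (x, t))) i j
        = (Vmat q x t (-(starRingEnd ℂ) k) * Φ (x, t)) i j) :
    (∀ (x t : ℝ) (i j : Fin 2),
      deriv (fun y => PsiOf Φ y t i j) x + ((I * k) • (sigma3 * PsiOf Φ x t)) i j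
        = (Umat q x t * PsiOf Φ x t) i j) ∧
    (∀ (x t : ℝ) (i j : Fin 2),
      deriv (fun s => PsiOf Φ x s i j) t + ((2 * I * k ^ 2) • (sigma3 * PsiOf Φ x t)) i j
        = (Vmat q x t k * PsiOf Φ x t) i j) :=
  lax_pair_symmetry_general q k Φ hLaxX hLaxT
end

section
/- Let A > 0 and φ₁ ∈ ℝ. Define q(x,t) = A/(1 − e^{−Ax − iA²t + iφ₁}) for all (x,t) ∈ ℝ² with e^{−Ax − iA²t + iφ₁} ≠ 1. Then at every such point q satisfies the NNLS equation: i ∂_t q(x,t) + ∂_x² q(x,t) + 2 q(x,t)² conj(q(−x,t)) = 0 (note that e^{−Ax − iA²t + iφ₁} ≠ 1 also implies e^{Ax − iA²t + iφ₁} ≠ 1, so conj(q(−x,t)) is defined). -/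
/-!
Write `E = e^{−Ax − iA²t + iφ₁}`, so `q = A/(1 − E)`. Since `E` is the exponential of a
function affine in `x` and `t`, every derivative of `q` is a rational function of `E`:
`q_t = −iA³E/(1 − E)²` and `q_xx = A³E(1 + E)/(1 − E)³`. Reflection `x ↦ −x` followed by
conjugation inverts `E`, so `conj q(−x,t) = AE/(E − 1)`, and the equation becomes an identity
of rational functions in `E`.
-/

open Complex

/-- The one-soliton solution q(x,t) = A/(1 − e^{−Ax − iA²t + iφ₁}) of the NNLS equation
with step-like background. -/
noncomputable def oneSoliton (A φ₁ : ℝ) (x t : ℝ) : ℂ :=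
  (A : ℂ) / (1 - Complex.exp (-(A : ℂ) * x - I * (A : ℂ) ^ 2 * t + I * φ₁))

lemma HasDerivAt.comp_ofReal_affine {f : ℂ → ℂ} {f' c d : ℂ} {x : ℝ}
    (hf : HasDerivAt f f' (c * x + d)) :
    HasDerivAt (fun y : ℝ => f (c * y + d)) (f' * c) x := by
  have hline : HasDerivAt (fun y : ℝ => c * (y : ℂ) + d) c x := by
    simpa using (((hasDerivAt_id (x : ℂ)).const_mul c).add_const d).comp_ofReal
  exact hf.comp x hline

section
variable (a : ℂ) {z : ℂ}

lemma hasDerivAt_div_one_sub_exp (hz : exp z ≠ 1) :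
    HasDerivAt (fun w => a / (1 - exp w)) (a * exp z / (1 - exp z) ^ 2) z := by
  have hd : 1 - exp z ≠ 0 := sub_ne_zero.mpr hz.symm
  refine ((hasDerivAt_const z a).div ((hasDerivAt_exp z).const_sub 1) hd).congr_deriv ?_
  ring

lemma hasDerivAt_mul_exp_div_one_sub_exp_sq (hz : exp z ≠ 1) :
    HasDerivAt (fun w => a * exp w / (1 - exp w) ^ 2)
      (a * exp z * (1 + exp z) / (1 - exp z) ^ 3) z := by
  have hd : 1 - exp z ≠ 0 := sub_ne_zero.mpr hz.symm
  refine (((hasDerivAt_exp z).const_mul a).div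
    (((hasDerivAt_exp z).const_sub 1).fun_pow 2) (pow_ne_zero 2 hd)).congr_deriv ?_
  field_simp
  ring

end

lemma nnls_identity (a E : ℂ) (hE : E ≠ 1) :
    I * (-(I * a ^ 3) * E / (1 - E) ^ 2) + a ^ 3 * E * (1 + E) / (1 - E) ^ 3
      + 2 * (a / (1 - E)) ^ 2 * (a * E / (E - 1)) = 0 := by
  have h₁ : 1 - E ≠ 0 := sub_ne_zero.mpr hE.symm
  have h₂ : E - 1 ≠ 0 := sub_ne_zero.mpr hE
  field_simp
  ring_nf
  rw [I_sq]
  ring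

noncomputable def solitonExp (A φ₁ x t : ℝ) : ℂ :=
  exp (-(A : ℂ) * x - I * (A : ℂ) ^ 2 * t + I * φ₁)

section
variable (A φ₁ : ℝ) {x t : ℝ}

lemma oneSoliton_eq_div (x t : ℝ) :
    oneSoliton A φ₁ x t = A / (1 - solitonExp A φ₁ x t) := rfl

lemma solitonExp_eq_space (x t : ℝ) :
    solitonExp A φ₁ x t = exp (-(A : ℂ) * x + (I * φ₁ - I * (A : ℂ) ^ 2 * t)) := by
  rw [solitonExp]
  ring_nf

lemma solitonExp_eq_time (x t : ℝ) :
    solitonExp A φ₁ x t = exp (-(I * (A : ℂ) ^ 2) * t + (I * φ₁ - A * x)) := by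
  rw [solitonExp]
  ring_nf

lemma hasDerivAt_oneSoliton_space (h : solitonExp A φ₁ x t ≠ 1) :
    HasDerivAt (fun y => oneSoliton A φ₁ y t)
      (-(A : ℂ) ^ 2 * solitonExp A φ₁ x t / (1 - solitonExp A φ₁ x t) ^ 2) x := by
  simp only [oneSoliton_eq_div, solitonExp_eq_space] at h ⊢
  refine ((hasDerivAt_div_one_sub_exp _ h).comp_ofReal_affine).congr_deriv ?_
  ring

lemma hasDerivAt_oneSoliton_time (h : solitonExp A φ₁ x t ≠ 1) :
    HasDerivAt (fun s => oneSoliton A φ₁ x s)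
      (-(I * (A : ℂ) ^ 3) * solitonExp A φ₁ x t / (1 - solitonExp A φ₁ x t) ^ 2) t := by
  simp only [oneSoliton_eq_div, solitonExp_eq_time] at h ⊢
  refine ((hasDerivAt_div_one_sub_exp _ h).comp_ofReal_affine).congr_deriv ?_
  ring

lemma hasDerivAt_deriv_oneSoliton_space (h : solitonExp A φ₁ x t ≠ 1) :
    HasDerivAt (fun y => deriv (fun y' => oneSoliton A φ₁ y' t) y)
      ((A : ℂ) ^ 3 * solitonExp A φ₁ x t * (1 + solitonExp A φ₁ x t)
        / (1 - solitonExp A φ₁ x t) ^ 3) x := by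
  have hcont : Continuous fun y => solitonExp A φ₁ y t := by
    unfold solitonExp; fun_prop
  have hderiv : (fun y => deriv (fun y' => oneSoliton A φ₁ y' t) y) =ᶠ[nhds x]
      fun y => -(A : ℂ) ^ 2 * solitonExp A φ₁ y t / (1 - solitonExp A φ₁ y t) ^ 2 := by
    filter_upwards [hcont.continuousAt.eventually_ne h] with y hy
    exact (hasDerivAt_oneSoliton_space A φ₁ hy).deriv
  refine HasDerivAt.congr_of_eventuallyEq ?_ hderiv
  simp only [solitonExp_eq_space] at h ⊢
  refine ((hasDerivAt_mul_exp_div_one_sub_exp_sq _ h).comp_ofReal_affine).congr_deriv ?_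
  ring

lemma conj_oneSoliton_neg (x t : ℝ) :
    starRingEnd ℂ (oneSoliton A φ₁ (-x) t)
      = A * solitonExp A φ₁ x t / (solitonExp A φ₁ x t - 1) := by
  have hconj : starRingEnd ℂ (solitonExp A φ₁ (-x) t) = (solitonExp A φ₁ x t)⁻¹ := by
    rw [solitonExp, solitonExp, ← exp_conj, ← exp_neg]
    congr 1
    simp only [map_add, map_sub, map_mul, map_neg, map_pow, conj_ofReal, conj_I, ofReal_neg]
    ring
  have hE : solitonExp A φ₁ x t ≠ 0 := exp_ne_zero _
  rw [oneSoliton_eq_div, map_div₀, map_sub, map_one, conj_ofReal, hconj,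
    ← div_div_eq_mul_div, sub_div, div_self hE, one_div]

end

theorem one_soliton_solves_nnls_general (A φ₁ : ℝ) (x t : ℝ)
    (h : Complex.exp (-(A : ℂ) * x - I * (A : ℂ) ^ 2 * t + I * φ₁) ≠ 1) :
    I * deriv (fun s => oneSoliton A φ₁ x s) t
      + deriv (fun y => deriv (fun y' => oneSoliton A φ₁ y' t) y) x
      + 2 * oneSoliton A φ₁ x t ^ 2 * (starRingEnd ℂ) (oneSoliton A φ₁ (-x) t) = 0 := by
  rw [(hasDerivAt_oneSoliton_time A φ₁ h).deriv,
    (hasDerivAt_deriv_oneSoliton_space A φ₁ h).deriv, conj_oneSoliton_neg, oneSoliton_eq_div]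
  exact nnls_identity A _ h

/-- At every point where the denominator does not vanish, the one-soliton
solution satisfies the NNLS equation i qₜ + qₓₓ + 2 q² conj(q(−x,t)) = 0. -/
theorem one_soliton_solves_nnls (A φ₁ : ℝ) (hA : 0 < A) (x t : ℝ)
    (h : Complex.exp (-(A : ℂ) * x - I * (A : ℂ) ^ 2 * t + I * φ₁) ≠ 1) :
    I * deriv (fun s => oneSoliton A φ₁ x s) t
      + deriv (fun y => deriv (fun y' => oneSoliton A φ₁ y' t) y) x
      + 2 * oneSoliton A φ₁ x t ^ 2 * (starRingEnd ℂ) (oneSoliton A φ₁ (-x) t) = 0 :=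
  one_soliton_solves_nnls_general A φ₁ x t h
end
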